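/- Let n > 3 and let Ω be the set of 3-element subsets of {1,...,n}. Let m be the minimal number of colors needed to color Ω so that whenever 1 ≤ a < b < c < d ≤ n, the triples {a,b,c} and {b,c,d} receive different colors. Then (1/100)·log log n ≤ m ≤ 100·log log n. -/

import Mathlib

/-!
A proper coloring `f` of the triples with `m` colors induces a proper coloring of the pairs
`a < b` (adjacent when of the form `ab`, `bc`) by the sets `{f (x, a, b) | x < a}`, hence with
`2 ^ m` colors; a proper coloring `g` of the pairs with `k` colors makes `b ↦ {g (a, b) | a < b}`
injective, so `n ≤ 2 ^ 2 ^ m`.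

Conversely, coloring `a < b` by the highest bit in which `a` and `b` differ is proper on pairs,
since that bit is `1` in `b` when compared with `a` and `0` in `b` when compared with `c > b`;
it uses about `log n` colors. Coloring the triple `abc` by the highest differing bit of the two
pair colors of `ab` and `bc`, together with which of them is larger, is then proper on triples
and uses about `2 log log n` colors.
-/

open Real

def highestDiffBit (a b : ℕ) : ℕ := (a ^^^ b).log2

lemma highestDiffBit_comm (a b : ℕ) : highestDiffBit a b = highestDiffBit b a := by
  rw [highestDiffBit, highestDiffBit, Nat.xor_comm]

lemma testBit_highestDiffBit_of_lt {a b : ℕ} (h : a < b) :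
    a.testBit (highestDiffBit a b) = false ∧ b.testBit (highestDiffBit a b) = true := by
  have hab : a ^^^ b ≠ 0 := by simpa using h.ne
  set i := highestDiffBit a b
  have hdiff : (a.testBit i ^^ b.testBit i) = true := by
    rw [← Nat.testBit_xor]
    exact Nat.testBit_log2 hab
  have hhigh : ∀ j, i < j → b.testBit j = a.testBit j := fun j hj => by
    have := Nat.testBit_lt_two_pow ((Nat.log2_lt hab).1 hj)
    rw [Nat.testBit_xor] at this
    exact (by simpa using this : a.testBit j = b.testBit j).symm
  have hne : a.testBit i ≠ b.testBit i := by simpa using hdiff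
  have ha : a.testBit i = false := by
    by_contra ha
    have ha : a.testBit i = true := by simpa using ha
    have hb : b.testBit i = false := by simpa [ha] using hne.symm
    exact (Nat.lt_of_testBit i hb ha hhigh).not_gt h
  exact ⟨ha, by simpa [ha] using hne.symm⟩

lemma highestDiffBit_lt {a b k : ℕ} (ha : a < 2 ^ k) (hb : b < 2 ^ k) (hab : a ≠ b) :
    highestDiffBit a b < k :=
  (Nat.log2_lt (by simpa using hab)).2 (Nat.xor_lt_two_pow ha hb)

abbrev IncreasingTriple (α : Type*) [LT α] : Type _ :=
  {t : α × α × α // t.1 < t.2.1 ∧ t.2.1 < t.2.2}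

section ShiftColoring

variable {α β : Type*}

def IsShiftColoring [LT α] (g : α → α → β) : Prop :=
  ∀ ⦃a b c⦄, a < b → b < c → g a b ≠ g b c

def IsDoubleShiftColoring [LT α] (f : IncreasingTriple α → β) : Prop :=
  ∀ (a b c d : α) (hab : a < b) (hbc : b < c) (hcd : c < d),
    f ⟨(a, b, c), hab, hbc⟩ ≠ f ⟨(b, c, d), hbc, hcd⟩

lemma IsShiftColoring.card_le_two_pow [LinearOrder α] [Fintype α] [Fintype β]
    {g : α → α → β} (hg : IsShiftColoring g) : Fintype.card α ≤ 2 ^ Fintype.card β := by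
  let colorsInto : α → Set β := fun b => {y | ∃ a < b, g a b = y}
  have hinj : Function.Injective colorsInto := .of_lt_imp_ne fun b c hbc h => by
    have : g b c ∈ colorsInto b := h ▸ ⟨b, hbc, rfl⟩
    obtain ⟨a, hab, hg_eq⟩ := this
    exact hg hab hbc hg_eq
  simpa using Fintype.card_le_of_injective colorsInto hinj

def leftColors [LT α] (f : IncreasingTriple α → β) (a b : α) : Set β :=
  {y | ∃ (x : α) (hxa : x < a) (hab : a < b), f ⟨(x, a, b), hxa, hab⟩ = y}

lemma IsDoubleShiftColoring.isShiftColoring_leftColors [LT α]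
    {f : IncreasingTriple α → β} (hf : IsDoubleShiftColoring f) :
    IsShiftColoring (leftColors f) := fun a b c hab hbc h => by
  have : f ⟨(a, b, c), hab, hbc⟩ ∈ leftColors f b c := ⟨a, hab, hbc, rfl⟩
  rw [← h] at this
  obtain ⟨x, hxa, _, hfx⟩ := this
  exact hf x a b c hxa hab hbc hfx

lemma IsDoubleShiftColoring.card_le_two_pow_two_pow [LinearOrder α] [Fintype α] [Fintype β]
    {f : IncreasingTriple α → β} (hf : IsDoubleShiftColoring f) :
    Fintype.card α ≤ 2 ^ 2 ^ Fintype.card β := by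
  simpa using hf.isShiftColoring_leftColors.card_le_two_pow

end ShiftColoring

lemma isShiftColoring_highestDiffBit : IsShiftColoring highestDiffBit := fun a b c hab hbc h => by
  have := (testBit_highestDiffBit_of_lt hab).2
  rw [h, (testBit_highestDiffBit_of_lt hbc).1] at this
  exact Bool.false_ne_true this

def arcColor (x y : ℕ) : ℕ := 2 * highestDiffBit x y + if x < y then 1 else 0

lemma arcColor_ne {x y z : ℕ} (hxy : x ≠ y) (hyz : y ≠ z) : arcColor x y ≠ arcColor y z := by
  intro h
  unfold arcColor at h
  rcases hxy.lt_or_gt with hxy | hyx <;> rcases hyz.lt_or_gt with hyz | hzy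
  · exact isShiftColoring_highestDiffBit hxy hyz (by simp_all)
  · simp [hxy, hzy.not_gt] at h
    omega
  · simp [hyz, hyx.not_gt] at h
    omega
  · refine isShiftColoring_highestDiffBit hzy hyx ?_
    rw [highestDiffBit_comm z y, highestDiffBit_comm y x]
    simp [hyx.not_gt, hzy.not_gt] at h
    exact h.symm

lemma arcColor_lt {x y k : ℕ} (hx : x < 2 ^ k) (hy : y < 2 ^ k) (hxy : x ≠ y) :
    arcColor x y < 2 * k := by
  have := highestDiffBit_lt hx hy hxy
  unfold arcColor
  split <;> omega

lemma IsShiftColoring.isDoubleShiftColoring_arcColor {α : Type*} [LT α] {g : α → α → ℕ}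
    (hg : IsShiftColoring g) :
    IsDoubleShiftColoring fun t : IncreasingTriple α =>
      arcColor (g t.1.1 t.1.2.1) (g t.1.2.1 t.1.2.2) :=
  fun _ _ _ _ hab hbc hcd => arcColor_ne (hg hab hbc) (hg hbc hcd)

lemma exists_isDoubleShiftColoring_fin (n : ℕ) :
    ∃ f : IncreasingTriple (Fin n) → Fin (2 * (Nat.log 2 (Nat.log 2 n + 1) + 1)),
      IsDoubleShiftColoring f := by
  set k := Nat.log 2 n + 1
  have hn : n < 2 ^ k := Nat.lt_pow_succ_log_self one_lt_two n
  have hk : k < 2 ^ (Nat.log 2 k + 1) := Nat.lt_pow_succ_log_self one_lt_two k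
  let g : Fin n → Fin n → ℕ := fun a b => highestDiffBit a b
  have hg : IsShiftColoring g := fun _ _ _ hab hbc => isShiftColoring_highestDiffBit hab hbc
  have hg_lt : ∀ a b : Fin n, a < b → g a b < 2 ^ (Nat.log 2 k + 1) := fun a b hab =>
    (highestDiffBit_lt (a.2.trans hn) (b.2.trans hn) (Fin.val_ne_of_ne hab.ne)).trans hk
  refine ⟨fun t => ⟨_, arcColor_lt (hg_lt _ _ t.2.1) (hg_lt _ _ t.2.2) (hg t.2.1 t.2.2)⟩, ?_⟩
  intro a b c d hab hbc hcd h
  exact hg.isDoubleShiftColoring_arcColor a b c d hab hbc hcd (congrArg Fin.val h)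

lemma one_le_logb_logb {n : ℕ} (hn : 4 ≤ n) : 1 ≤ logb 2 (logb 2 n) := by
  have hL : 2 ≤ logb 2 n := by
    rw [le_logb_iff_rpow_le one_lt_two (by positivity)]
    norm_num
    exact_mod_cast hn
  rw [le_logb_iff_rpow_le one_lt_two (by linarith)]
  simpa using hL

lemma logb_logb_le_of_le_two_pow_two_pow {n m : ℕ} (hn : 2 ≤ n) (h : n ≤ 2 ^ 2 ^ m) :
    logb 2 (logb 2 n) ≤ m := by
  have hL : 0 < logb 2 n := logb_pos one_lt_two (by exact_mod_cast hn)
  rw [logb_le_iff_le_rpow one_lt_two hL, logb_le_iff_le_rpow one_lt_two (by positivity)]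
  exact_mod_cast h

lemma natLog_natLog_succ_le_logb_logb {n : ℕ} (hn : 2 ≤ n) :
    (Nat.log 2 (Nat.log 2 n + 1) : ℝ) ≤ 1 + logb 2 (logb 2 n) := by
  have hL : 1 ≤ logb 2 n := by
    rw [le_logb_iff_rpow_le one_lt_two (by positivity)]
    norm_num
    exact_mod_cast hn
  have hk : ((Nat.log 2 n + 1 : ℕ) : ℝ) ≤ 2 * logb 2 n := by
    have := natLog_le_logb n 2
    push_cast at this ⊢
    linarith
  calc (Nat.log 2 (Nat.log 2 n + 1) : ℝ) ≤ logb 2 ((Nat.log 2 n + 1 : ℕ) : ℝ) := by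
        exact_mod_cast natLog_le_logb _ 2
    _ ≤ logb 2 (2 * logb 2 n) := logb_le_logb_of_le one_lt_two (by positivity) hk
    _ = 1 + logb 2 (logb 2 n) := by
        rw [logb_mul two_ne_zero (by positivity), logb_self_eq_one one_lt_two]

/-- IMC 2022 Problem 4: the chromatic number `m` of the double shift graph on
triples from `{1,…,n}` satisfies `(1/100)·log log n ≤ m ≤ 100·log log n`. -/
theorem double_shift_chromatic (n : ℕ) (hn : 3 < n) (m : ℕ)
    (hm : IsLeast {q : ℕ |
      ∃ f : {t : Fin n × Fin n × Fin n // t.1 < t.2.1 ∧ t.2.1 < t.2.2} → Fin q,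
        ∀ (a b c d : Fin n) (hab : a < b) (hbc : b < c) (hcd : c < d),
          f ⟨(a, b, c), hab, hbc⟩ ≠ f ⟨(b, c, d), hbc, hcd⟩} m) :
    (1 / 100 : ℝ) * Real.logb 2 (Real.logb 2 n) ≤ (m : ℝ) ∧
    (m : ℝ) ≤ 100 * Real.logb 2 (Real.logb 2 n) := by
  obtain ⟨⟨f, hf⟩, hleast⟩ := hm
  have hlower : logb 2 (logb 2 n) ≤ m :=
    logb_logb_le_of_le_two_pow_two_pow (by omega)
      (by simpa using IsDoubleShiftColoring.card_le_two_pow_two_pow hf)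
  have hupper : m ≤ 2 * (Nat.log 2 (Nat.log 2 n + 1) + 1) :=
    hleast (exists_isDoubleShiftColoring_fin n)
  have hLL := one_le_logb_logb (by omega : 4 ≤ n)
  have hlog := natLog_natLog_succ_le_logb_logb (by omega : 2 ≤ n)
  constructor
  · linarith
  · have : (m : ℝ) ≤ 2 * ((Nat.log 2 (Nat.log 2 n + 1) : ℝ) + 1) := by exact_mod_cast hupper
    linarith
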